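/- arXiv:1705.09167 — 2 statements merged into one kernel-verified Lean document; each statement's English description precedes it below -/
import Mathlib

section
/- Every finite poset with local dimension at most 2 has dimension at most 2; consequently, local dimension 2 and dimension 2 are equivalent. -/
/-- `L` is a realizer of the order `le`: a family of linear extensions of `le`
whose intersection is `le`. -/
def IsRealizer {X : Type*} (le : X → X → Prop) {d : ℕ} (L : Fin d → X → X → Prop) : Prop :=
  (∀ i, IsLinearOrder X (L i)) ∧ (∀ (i) (x y : X), le x y → L i x y) ∧
    (∀ x y : X, le x y ↔ ∀ i, L i x y)

/-- The (Dushnik–Miller) dimension of a poset: the least size of a realizer. -/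
noncomputable def orderDim (X : Type*) [PartialOrder X] : ℕ :=
  sInf {d : ℕ | ∃ L : Fin d → X → X → Prop, IsRealizer (· ≤ ·) L}

/-- `L` together with the boolean function `φ` is a boolean realizer of `le`. -/
def IsBooleanRealizer {X : Type*} (le : X → X → Prop) {d : ℕ}
    (L : Fin d → X → X → Prop) (φ : (Fin d → Prop) → Prop) : Prop :=
  (∀ i, IsLinearOrder X (L i)) ∧ ∀ x y : X, le x y ↔ φ (fun i => L i x y)

/-- Boolean dimension of a relation. -/
noncomputable def booleanDimRel {X : Type*} (le : X → X → Prop) : ℕ :=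
  sInf {d : ℕ | ∃ (L : Fin d → X → X → Prop) (φ : (Fin d → Prop) → Prop),
    IsBooleanRealizer le L φ}

/-- Boolean dimension of a poset. -/
noncomputable def booleanDim (X : Type*) [PartialOrder X] : ℕ :=
  booleanDimRel ((· ≤ ·) : X → X → Prop)

/-- A partial linear extension of `le`: a linear order on a subset of `X`
extending the restriction of `le` to that subset. -/
structure PLE {X : Type*} (le : X → X → Prop) where
  dom : Set X
  rel : X → X → Prop
  mem_left : ∀ x y, rel x y → x ∈ dom
  mem_right : ∀ x y, rel x y → y ∈ dom
  refl : ∀ x ∈ dom, rel x x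
  antisymm : ∀ x y, rel x y → rel y x → x = y
  trans : ∀ x y z, rel x y → rel y z → rel x z
  total : ∀ x ∈ dom, ∀ y ∈ dom, rel x y ∨ rel y x
  le_imp : ∀ x ∈ dom, ∀ y ∈ dom, le x y → rel x y

/-- A family of partial linear extensions is a local realizer of `le`:
`x ≤ y` iff no member reverses the pair strictly. -/
def IsLocalRealizer {X : Type*} {le : X → X → Prop} {ι : Type*} (L : ι → PLE le) : Prop :=
  ∀ x y : X, le x y ↔ ∀ i, ¬ ((L i).rel y x ∧ y ≠ x)

/-- Every element of `X` occurs in the domain of at most `d` members of the family. -/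
def WidthAtMost {X : Type*} {le : X → X → Prop} {ι : Type*} (L : ι → PLE le) (d : ℕ) : Prop :=
  ∀ x : X, ({i : ι | x ∈ (L i).dom}).ncard ≤ d

/-- Local dimension of a poset: the least width of a local realizer. -/
noncomputable def localDim (X : Type*) [PartialOrder X] : ℕ :=
  sInf {d : ℕ | ∃ (t : ℕ) (L : Fin t → PLE ((· ≤ ·) : X → X → Prop)),
    IsLocalRealizer L ∧ WidthAtMost L d}

/-!
In a local realizer of width two, an element `x` that is incomparable to some `z` lies in the
domains of exactly two partial extensions, and these order the pair `x, z` in opposite directions.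
Fixing a linear order on the index set, put `x` below an incomparable `y` when the later of the two
extensions containing them puts `x` below `y`. This is a linear extension, and so is the rule
obtained from the reversed index order; their intersection is the given order. Width one forces a
chain, which handles the cases of dimension at most one, and a realizer is itself a local realizer
of the same width.
-/

section

variable {X : Type*}

namespace PLE

variable {le : X → X → Prop}

lemma eq_of_le_of_rel (p : PLE le) {x y : X} (hle : le x y) (h : p.rel y x) : x = y :=
  p.antisymm x y (p.le_imp x (p.mem_right y x h) y (p.mem_left y x h) hle) h

/-- The partial linear extension on `{a, b}` that puts `b` below `a`. -/
def reversal [PartialOrder X] (a b : X) (hab : ¬ a ≤ b) : PLE ((· ≤ ·) : X → X → Prop) where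
  dom := {a, b}
  rel x y := x ∈ ({a, b} : Set X) ∧ y ∈ ({a, b} : Set X) ∧ (x = b ∨ y = a)
  mem_left _ _ h := h.1
  mem_right _ _ h := h.2.1
  refl x hx := by grind
  antisymm x y := by grind
  trans x y z := by grind
  total x hx y hy := by grind
  le_imp x hx y hy hxy := by grind

lemma reversal_rel_and_ne_iff [PartialOrder X] {a b x y : X} (hab : ¬ a ≤ b) :
    (reversal a b hab).rel y x ∧ y ≠ x ↔ x = a ∧ y = b := by
  simp only [reversal, Set.mem_insert_iff, Set.mem_singleton_iff]
  constructor
  · grind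
  · rintro ⟨rfl, rfl⟩
    exact ⟨by simp, by rintro rfl; exact hab le_rfl⟩

def ofLinearExtension (r : X → X → Prop) (hr : IsLinearOrder X r) (hle : ∀ x y, le x y → r x y) :
    PLE le where
  dom := Set.univ
  rel := r
  mem_left _ _ _ := trivial
  mem_right _ _ _ := trivial
  refl x _ := hr.refl x
  antisymm := hr.antisymm
  trans := hr.trans
  total x _ y _ := hr.total x y
  le_imp x _ y _ := hle x y

end PLE

section LocalRealizer

variable {le : X → X → Prop} {ι : Type*} {L : ι → PLE le}

lemma IsLocalRealizer.exists_rel_of_not_le (hL : IsLocalRealizer L) {x y : X} (h : ¬ le x y) :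
    ∃ i, (L i).rel y x ∧ y ≠ x := by
  simpa [hL x y] using h

lemma IsLocalRealizer.comp_equiv {κ : Type*} (hL : IsLocalRealizer L) (e : κ ≃ ι) :
    IsLocalRealizer (L ∘ e) := fun x y => (hL x y).trans e.forall_congr_right.symm

lemma widthAtMost_fin {t : ℕ} (L : Fin t → PLE le) : WidthAtMost L t := fun _ =>
  (Set.ncard_le_card _).trans (Nat.card_eq_fintype_card.trans (Fintype.card_fin t)).le

lemma WidthAtMost.mono {d e : ℕ} (hW : WidthAtMost L d) (hde : d ≤ e) : WidthAtMost L e :=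
  fun x => (hW x).trans hde

lemma WidthAtMost.card_le [Finite ι] {d : ℕ} (hW : WidthAtMost L d) {x : X} {s : Finset ι}
    (hs : ∀ i ∈ s, x ∈ (L i).dom) : s.card ≤ d := by
  rw [← Set.ncard_coe_finset]
  exact (Set.ncard_le_ncard (fun i hi => hs i hi) (Set.toFinite _)).trans (hW x)

lemma WidthAtMost.eq_or_eq [Finite ι] (hW : WidthAtMost L 2) {x : X}
    {i j k : ι} (hij : i ≠ j) (hi : x ∈ (L i).dom) (hj : x ∈ (L j).dom) (hk : x ∈ (L k).dom) :
    k = i ∨ k = j := by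
  classical
  by_contra! hne
  have := hW.card_le (x := x) (s := {i, j, k}) (by simp [hi, hj, hk])
  rw [Finset.card_insert_of_notMem (by simp [hij, hne.1.symm]),
    Finset.card_pair hne.2.symm] at this
  omega

lemma WidthAtMost.eq_and_eq_of_lt [LinearOrder ι] [Finite ι] (hW : WidthAtMost L 2) {x : X}
    {i j k l : ι} (hij : i < j) (hkl : k < l) (hi : x ∈ (L i).dom) (hj : x ∈ (L j).dom)
    (hk : x ∈ (L k).dom) (hl : x ∈ (L l).dom) : k = i ∧ l = j := by
  have := hW.eq_or_eq hij.ne hi hj hk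
  have := hW.eq_or_eq hij.ne hi hj hl
  grind

end LocalRealizer

section Merge

variable [PartialOrder X] {ι : Type*} {L : ι → PLE ((· ≤ ·) : X → X → Prop)}

lemma IsLocalRealizer.rel_rel_of_incomparable [Finite ι] (hL : IsLocalRealizer L)
    (hW : WidthAtMost L 2) {x z : X} (hxz : ¬ x ≤ z) (hzx : ¬ z ≤ x) {k l : ι} (hkl : k ≠ l)
    (hk : x ∈ (L k).dom) (hl : x ∈ (L l).dom) :
    ((L k).rel z x ∧ (L l).rel x z) ∨ ((L l).rel z x ∧ (L k).rel x z) := by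
  obtain ⟨a, ha, -⟩ := hL.exists_rel_of_not_le hxz
  obtain ⟨b, hb, -⟩ := hL.exists_rel_of_not_le hzx
  have hab : a ≠ b := by
    rintro rfl
    exact hxz ((L a).antisymm z x ha hb).ge
  have hxa := (L a).mem_right z x ha
  have hxb := (L b).mem_left x z hb
  have := hW.eq_or_eq hab hxa hxb hk
  have := hW.eq_or_eq hab hxa hxb hl
  grind

def mergeLE [LT ι] (L : ι → PLE ((· ≤ ·) : X → X → Prop)) (x y : X) : Prop :=
  x ≤ y ∨ ∃ i j, i < j ∧ (L i).rel y x ∧ (L j).rel x y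

variable [LinearOrder ι]

lemma mergeLE_total (hL : IsLocalRealizer L) (x y : X) : mergeLE L x y ∨ mergeLE L y x := by
  by_cases hxy : x ≤ y
  · exact .inl (.inl hxy)
  by_cases hyx : y ≤ x
  · exact .inr (.inl hyx)
  obtain ⟨a, ha, hne⟩ := hL.exists_rel_of_not_le hxy
  obtain ⟨b, hb, -⟩ := hL.exists_rel_of_not_le hyx
  rcases lt_trichotomy a b with hab | rfl | hba
  · exact .inl (.inr ⟨a, b, hab, ha, hb⟩)
  · exact absurd ((L a).antisymm y x ha hb) hne
  · exact .inr (.inr ⟨b, a, hba, hb, ha⟩)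

variable [Finite ι]

lemma mergeLE_trans (hL : IsLocalRealizer L) (hW : WidthAtMost L 2) {x y z : X}
    (hxy : mergeLE L x y) (hyz : mergeLE L y z) : mergeLE L x z := by
  by_cases hxz : x ≤ z
  · exact .inl hxz
  rcases hxy with hxy | ⟨i, j, hij, hiyx, hjxy⟩ <;> rcases hyz with hyz | ⟨k, l, hkl, hkzy, hlyz⟩
  · exact absurd (hxy.trans hyz) hxz
  · have hzx : ¬ z ≤ x := fun hzx =>
      hxz ((L l).eq_of_le_of_rel (hzx.trans hxy) hlyz ▸ hxy)
    rcases (hL.rel_rel_of_incomparable hW hzx hxz hkl.ne ((L k).mem_left z y hkzy)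
      ((L l).mem_right y z hlyz)) with ⟨hkxz, hlzx⟩ | ⟨hlxz, hkzx⟩
    · refine absurd ?_ hxz
      have hlxy := (L l).le_imp x ((L l).mem_right z x hlzx) y ((L l).mem_left y z hlyz) hxy
      exact ((L l).antisymm x z ((L l).trans x y z hlxy hlyz) hlzx).le
    · exact .inr ⟨k, l, hkl, hkzx, hlxz⟩
  · have hzx : ¬ z ≤ x := fun hzx =>
      hxz ((L j).eq_of_le_of_rel (hyz.trans hzx) hjxy ▸ hyz)
    rcases (hL.rel_rel_of_incomparable hW hxz hzx hij.ne ((L i).mem_right y x hiyx)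
      ((L j).mem_left x y hjxy)) with ⟨hizx, hjxz⟩ | ⟨hjzx, hixz⟩
    · exact .inr ⟨i, j, hij, hizx, hjxz⟩
    · refine absurd ?_ hxz
      have hjyz := (L j).le_imp y ((L j).mem_right x y hjxy) z ((L j).mem_left z x hjzx) hyz
      exact ((L j).antisymm x z ((L j).trans x y z hjxy hjyz) hjzx).le
  · obtain ⟨rfl, rfl⟩ := hW.eq_and_eq_of_lt hij hkl ((L i).mem_left y x hiyx)
      ((L j).mem_right x y hjxy) ((L k).mem_right z y hkzy) ((L l).mem_left y z hlyz)
    exact .inr ⟨k, l, hkl, (L k).trans z y x hkzy hiyx, (L l).trans x y z hjxy hlyz⟩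

lemma mergeLE_antisymm (hW : WidthAtMost L 2) {x y : X} (hxy : mergeLE L x y)
    (hyx : mergeLE L y x) : x = y := by
  rcases hxy with hxy | ⟨i, j, hij, hiyx, hjxy⟩ <;> rcases hyx with hyx | ⟨k, l, hkl, hkxy, hlyx⟩
  · exact le_antisymm hxy hyx
  · exact (L l).eq_of_le_of_rel hxy hlyx
  · exact ((L j).eq_of_le_of_rel hyx hjxy).symm
  · obtain ⟨rfl, rfl⟩ := hW.eq_and_eq_of_lt hij hkl ((L i).mem_right y x hiyx)
      ((L j).mem_left x y hjxy) ((L k).mem_left x y hkxy) ((L l).mem_right y x hlyx)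
    exact (L k).antisymm x y hkxy hiyx

lemma isLinearOrder_mergeLE (hL : IsLocalRealizer L) (hW : WidthAtMost L 2) :
    IsLinearOrder X (mergeLE L) where
  refl _ := .inl le_rfl
  trans _ _ _ := mergeLE_trans hL hW
  antisymm _ _ := mergeLE_antisymm hW
  total := mergeLE_total hL

lemma le_of_mergeLE_of_mergeLE_ofDual (hW : WidthAtMost L 2) {x y : X} (h : mergeLE L x y)
    (h' : mergeLE (L ∘ OrderDual.ofDual) x y) : x ≤ y := by
  rcases h with hxy | ⟨i, j, hij, hiyx, hjxy⟩
  · exact hxy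
  rcases h' with hxy | ⟨l, k, hkl, hlyx, hkxy⟩
  · exact hxy
  obtain ⟨rfl, rfl⟩ := hW.eq_and_eq_of_lt (k := OrderDual.ofDual k) (l := OrderDual.ofDual l)
    hij hkl ((L i).mem_right y x hiyx) ((L j).mem_left x y hjxy) ((L _).mem_left x y hkxy)
    ((L _).mem_right y x hlyx)
  exact ((L _).antisymm x y hjxy hlyx).le

theorem isRealizer_mergeLE (hL : IsLocalRealizer L) (hW : WidthAtMost L 2) :
    IsRealizer (· ≤ ·) ![mergeLE L, mergeLE (L ∘ OrderDual.ofDual)] := by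
  refine ⟨?_, ?_, fun x y => ⟨fun hxy i => ?_, fun h => ?_⟩⟩
  · intro i
    fin_cases i
    · exact isLinearOrder_mergeLE hL hW
    · exact isLinearOrder_mergeLE (L := L ∘ OrderDual.ofDual) hL hW
  · intro i x y hxy
    fin_cases i <;> exact .inl hxy
  · fin_cases i <;> exact .inl hxy
  · exact le_of_mergeLE_of_mergeLE_ofDual hW (h 0) (h 1)

end Merge

section Dimension

variable [PartialOrder X]

lemma isLocalRealizer_reversal :
    IsLocalRealizer fun p : {p : X × X // ¬ p.1 ≤ p.2} => PLE.reversal p.1.1 p.1.2 p.2 := by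
  intro x y
  simp only [PLE.reversal_rel_and_ne_iff, not_and, Subtype.forall, Prod.forall]
  refine ⟨fun hxy a b hab hxa hyb => hab (hxa ▸ hyb ▸ hxy), fun h => ?_⟩
  by_contra hxy
  exact h x y hxy rfl rfl

lemma exists_isLocalRealizer_fin [Finite X] :
    ∃ (t : ℕ) (L : Fin t → PLE ((· ≤ ·) : X → X → Prop)), IsLocalRealizer L :=
  ⟨_, _, isLocalRealizer_reversal.comp_equiv (Finite.equivFin _).symm⟩

lemma exists_isLocalRealizer_widthAtMost_localDim [Finite X] :
    ∃ (t : ℕ) (L : Fin t → PLE ((· ≤ ·) : X → X → Prop)),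
      IsLocalRealizer L ∧ WidthAtMost L (localDim X) := by
  obtain ⟨t, L, hL⟩ := exists_isLocalRealizer_fin (X := X)
  exact Nat.sInf_mem (s := {d | ∃ (t : ℕ) (L : Fin t → PLE ((· ≤ ·) : X → X → Prop)),
    IsLocalRealizer L ∧ WidthAtMost L d}) ⟨t, t, L, hL, widthAtMost_fin L⟩

lemma orderDim_le_of_isRealizer {d : ℕ} {R : Fin d → X → X → Prop}
    (hR : IsRealizer (· ≤ ·) R) : orderDim X ≤ d :=
  Nat.sInf_le ⟨R, hR⟩

lemma exists_isRealizer_orderDim (h : orderDim X ≠ 0) :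
    ∃ R : Fin (orderDim X) → X → X → Prop, IsRealizer (· ≤ ·) R :=
  Nat.sInf_mem (Nat.nonempty_of_pos_sInf (Nat.pos_of_ne_zero h))

lemma localDim_le_of_isRealizer {d : ℕ} {R : Fin d → X → X → Prop}
    (hR : IsRealizer (· ≤ ·) R) : localDim X ≤ d := by
  obtain ⟨hlin, hext, hiff⟩ := hR
  refine Nat.sInf_le ⟨d, fun i => .ofLinearExtension (R i) (hlin i) (hext i), fun x y => ?_,
    widthAtMost_fin _⟩
  refine ⟨fun hxy i ⟨hyx, hne⟩ => hne ((hlin i).antisymm y x hyx (hext i x y hxy)), fun h => ?_⟩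
  refine (hiff x y).2 fun i => by_contra fun hxy => h i ⟨?_, ?_⟩
  · exact ((hlin i).total x y).resolve_left hxy
  · rintro rfl
    exact hxy ((hlin i).refl y)

lemma localDim_le_orderDim {d : ℕ} {R : Fin d → X → X → Prop} (hR : IsRealizer (· ≤ ·) R) :
    localDim X ≤ orderDim X := by
  obtain ⟨R', hR'⟩ : ∃ R' : Fin (orderDim X) → X → X → Prop, IsRealizer (· ≤ ·) R' :=
    Nat.sInf_mem (s := {d | ∃ R : Fin d → X → X → Prop, IsRealizer (· ≤ ·) R}) ⟨d, R, hR⟩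
  exact localDim_le_of_isRealizer hR'

lemma IsLocalRealizer.total_of_widthAtMost_one {ι : Type*} [Finite ι]
    {L : ι → PLE ((· ≤ ·) : X → X → Prop)} (hL : IsLocalRealizer L) (hW : WidthAtMost L 1)
    (x y : X) : x ≤ y ∨ y ≤ x := by
  classical
  by_contra! h
  obtain ⟨a, ha, hne⟩ := hL.exists_rel_of_not_le h.1
  obtain ⟨b, hb, -⟩ := hL.exists_rel_of_not_le h.2
  have hab : a ≠ b := fun hab => hne ((L a).antisymm y x ha (hab ▸ hb))
  have := hW.card_le (x := x) (s := {a, b})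
    (by simp [(L a).mem_right y x ha, (L b).mem_left x y hb])
  rw [Finset.card_pair hab] at this
  omega

lemma isRealizer_le_of_total (h : ∀ x y : X, x ≤ y ∨ y ≤ x) :
    IsRealizer (· ≤ ·) fun _ : Fin 1 => ((· ≤ ·) : X → X → Prop) := by
  refine ⟨fun _ => ?_, fun _ _ _ => id, fun x y => ⟨fun h _ => h, fun h => h 0⟩⟩
  exact { refl := le_refl, trans := fun _ _ _ => le_trans, antisymm := fun _ _ => le_antisymm
          total := h }

lemma orderDim_le_one_of_localDim_le_one [Finite X] (h : localDim X ≤ 1) : orderDim X ≤ 1 := by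
  obtain ⟨t, L, hL, hW⟩ := exists_isLocalRealizer_widthAtMost_localDim (X := X)
  exact orderDim_le_of_isRealizer <|
    isRealizer_le_of_total (hL.total_of_widthAtMost_one (hW.mono h))

lemma exists_isRealizer_two_of_localDim_le_two [Finite X] (h : localDim X ≤ 2) :
    ∃ R : Fin 2 → X → X → Prop, IsRealizer (· ≤ ·) R := by
  obtain ⟨t, L, hL, hW⟩ := exists_isLocalRealizer_widthAtMost_localDim (X := X)
  exact ⟨_, isRealizer_mergeLE hL (hW.mono h)⟩

end Dimension

end

/-- Every finite poset with local dimension at most 2 has dimension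
at most 2; consequently, local dimension 2 and dimension 2 are equivalent. -/
theorem local_dim_two_iff_dim_two (X : Type*) [PartialOrder X] [Fintype X] :
    (localDim X ≤ 2 → orderDim X ≤ 2) ∧ (localDim X = 2 ↔ orderDim X = 2) := by
  have orderDim_le_two (h : localDim X ≤ 2) : orderDim X ≤ 2 :=
    (exists_isRealizer_two_of_localDim_le_two h).elim fun _ hR => orderDim_le_of_isRealizer hR
  have orderDim_le_one := orderDim_le_one_of_localDim_le_one (X := X)
  refine ⟨orderDim_le_two, fun h => ?_, fun h => ?_⟩
  · obtain ⟨R, hR⟩ := exists_isRealizer_two_of_localDim_le_two h.le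
    have := localDim_le_orderDim hR
    have := orderDim_le_two h.le
    omega
  · obtain ⟨R, hR⟩ := exists_isRealizer_orderDim (X := X) (by omega)
    have := localDim_le_orderDim hR
    omega
end

section
/- Let G = (V, E) be a finite acyclic directed graph and ≤ a partial order on E such that for all edges uv, vw, wx ∈ E (forming a directed path) one has uv < wx and uv ≰ vw. If ≤ has a boolean realizer of size d, then the second arc digraph G'' of G (whose vertices are the directed paths uvw of length 2 in G, with uvw adjacent to vwx whenever uv, vw, wx ∈ E) has chromatic number at most 2^d. Consequently, if the chromatic number of G'' exceeds 2^d, then the boolean dimension of (E, ≤) exceeds d. -/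
/-- The edge set of a directed graph `(V, E)`, as a type. -/
def Edges {V : Type*} (E : V → V → Prop) : Type _ := {p : V × V // E p.1 p.2}

/-- The vertices of the second arc digraph `G''` of `G = (V, E)`: directed paths
`uvw` of length 2 in `G`, i.e. pairs of consecutive edges. -/
def Paths2 {V : Type*} (E : V → V → Prop) : Type _ :=
  {p : Edges E × Edges E // p.1.1.2 = p.2.1.1}

section

variable {X : Type*}

theorem rel_iff_rel_of_rel_iff_rel {r : X → X → Prop} [IsLinearOrder X r] {x y z : X}
    (hxz : x ≠ z) (h : r x y ↔ r y z) : r x z ↔ r x y := by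
  by_cases hxy : r x y
  · exact iff_of_true (_root_.trans hxy (h.1 hxy)) hxy
  · have hyx : r y x := (total_of r x y).resolve_left hxy
    have hzy : r z y := (total_of r y z).resolve_left (mt h.2 hxy)
    exact iff_of_false (fun hxz' => hxz (antisymm hxz' (_root_.trans hzy hyx))) hxy

theorem IsBooleanRealizer.comparisons_ne {le : X → X → Prop} {d : ℕ}
    {L : Fin d → X → X → Prop} {φ : (Fin d → Prop) → Prop} (h : IsBooleanRealizer le L φ)
    {x y z : X} (hxz : le x z) (hne : x ≠ z) (hxy : ¬ le x y) :
    (fun i => L i x y) ≠ (fun i => L i y z) := by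
  intro hvec
  have hsame : (fun i => L i x z) = fun i => L i x y := funext fun i =>
    haveI := h.1 i
    propext (rel_iff_rel_of_rel_iff_rel hne (iff_of_eq (congrFun hvec i)))
  exact hxy ((h.2 x y).2 (hsame ▸ (h.2 x z).1 hxz))

theorem exists_linearExtension_rel_imp (le : X → X → Prop) [IsPartialOrder X le] (x y : X) :
    ∃ s : X → X → Prop, IsLinearOrder X s ∧ (∀ a b, le a b → s a b) ∧ (s x y → le x y) := by
  by_cases hxy : le x y
  · obtain ⟨s, hs, hext⟩ := extend_partialOrder le
    exact ⟨s, hs, hext, fun _ => hxy⟩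
  -- adjoin `y ≤ x` to `le`, which stays a partial order since `x ≰ y`
  let r : X → X → Prop := fun a b => le a b ∨ (le a y ∧ le x b)
  have : IsPartialOrder X r :=
    { refl := fun a => Or.inl (refl a)
      trans := by
        rintro a b c (hab | ⟨hay, hxb⟩) (hbc | ⟨hby, hxc⟩)
        · exact Or.inl (_root_.trans hab hbc)
        · exact Or.inr ⟨_root_.trans hab hby, hxc⟩
        · exact Or.inr ⟨hay, _root_.trans hxb hbc⟩
        · exact absurd (_root_.trans hxb hby) hxy
      antisymm := by
        rintro a b (hab | ⟨hay, hxb⟩) (hba | ⟨hby, hxa⟩)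
        · exact antisymm hab hba
        · exact absurd (_root_.trans hxa (_root_.trans hab hby)) hxy
        · exact absurd (_root_.trans hxb (_root_.trans hba hay)) hxy
        · exact absurd (_root_.trans hxb hby) hxy }
  obtain ⟨s, hs, hext⟩ := extend_partialOrder r
  refine ⟨s, hs, fun a b hab => hext a b (Or.inl hab), fun hsxy => ?_⟩
  have hsyx : s y x := hext y x (Or.inr ⟨refl y, refl x⟩)
  exact absurd (antisymm hsxy hsyx ▸ refl x) hxy

theorem exists_isRealizer_of_finite [Finite X] (le : X → X → Prop) [IsPartialOrder X le] :
    ∃ (d : ℕ) (L : Fin d → X → X → Prop), IsRealizer le L := by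
  choose s hlin hext hrel using exists_linearExtension_rel_imp le
  have e := Finite.equivFin (X × X)
  refine ⟨Nat.card (X × X), fun i => s (e.symm i).1 (e.symm i).2, fun i => hlin _ _,
    fun i a b => hext _ _ a b, fun a b => ⟨fun hab i => hext _ _ a b hab, fun h => ?_⟩⟩
  have hab := h (e (a, b))
  simp only [Equiv.symm_apply_apply] at hab
  exact hrel a b hab

theorem IsRealizer.isBooleanRealizer {le : X → X → Prop} {d : ℕ} {L : Fin d → X → X → Prop}
    (h : IsRealizer le L) : IsBooleanRealizer le L fun v => ∀ i, v i :=
  ⟨h.1, h.2.2⟩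

theorem exists_isBooleanRealizer_booleanDimRel [Finite X] (le : X → X → Prop)
    [IsPartialOrder X le] :
    ∃ (L : Fin (booleanDimRel le) → X → X → Prop) (φ : (Fin (booleanDimRel le) → Prop) → Prop),
      IsBooleanRealizer le L φ := by
  obtain ⟨d, L, hL⟩ := exists_isRealizer_of_finite le
  exact Nat.sInf_mem (⟨d, L, _, hL.isBooleanRealizer⟩ :
    ∃ d, ∃ (L : Fin d → X → X → Prop) (φ : (Fin d → Prop) → Prop), IsBooleanRealizer le L φ)

end

theorem exists_coloring_paths2_of_isBooleanRealizer {V : Type*} {E : V → V → Prop}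
    {le : Edges E → Edges E → Prop}
    (hpath : ∀ e f g : Edges E, e.1.2 = f.1.1 → f.1.2 = g.1.1 → le e g ∧ e ≠ g ∧ ¬ le e f)
    {d : ℕ} {L : Fin d → Edges E → Edges E → Prop} {φ : (Fin d → Prop) → Prop}
    (h : IsBooleanRealizer le L φ) :
    ∃ c : Paths2 E → Fin (2 ^ d), ∀ a b : Paths2 E, a.1.2 = b.1.1 → c a ≠ c b := by
  classical
  let enc : (Fin d → Bool) ≃ Fin (2 ^ d) := Fintype.equivFinOfCardEq (by simp)
  refine ⟨fun p => enc fun i => decide (L i p.1.1 p.1.2), fun a b hab hc => ?_⟩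
  obtain ⟨hle, hne, hnle⟩ := hpath a.1.1 a.1.2 b.1.2 a.2 (hab ▸ b.2)
  refine h.comparisons_ne hle hne hnle (funext fun i => ?_)
  have := congrFun (enc.injective hc) i
  rw [← hab] at this
  exact propext (decide_eq_decide.mp this)

theorem second_arc_digraph_chromatic_of_boolean_realizer_general
    {V : Type*} [Fintype V] (E : V → V → Prop)
    (le : Edges E → Edges E → Prop) (hpo : IsPartialOrder (Edges E) le)
    (hpath : ∀ e f g : Edges E, e.1.2 = f.1.1 → f.1.2 = g.1.1 →
      le e g ∧ e ≠ g ∧ ¬ le e f)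
    (d : ℕ) :
    ((∃ (L : Fin d → Edges E → Edges E → Prop) (φ : (Fin d → Prop) → Prop),
        IsBooleanRealizer le L φ) →
      ∃ c : Paths2 E → Fin (2 ^ d),
        ∀ a b : Paths2 E, a.1.2 = b.1.1 → c a ≠ c b) ∧
    ((¬ ∃ c : Paths2 E → Fin (2 ^ d),
        ∀ a b : Paths2 E, a.1.2 = b.1.1 → c a ≠ c b) →
      d < booleanDimRel le) := by
  refine ⟨fun ⟨_, _, h⟩ => exists_coloring_paths2_of_isBooleanRealizer hpath h, fun hnc => ?_⟩
  by_contra! hdim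
  have : Finite (Edges E) := Subtype.finite
  obtain ⟨L, φ, h⟩ := exists_isBooleanRealizer_booleanDimRel le
  obtain ⟨c, hc⟩ := exists_coloring_paths2_of_isBooleanRealizer hpath h
  have hcast := Fin.castLE_injective (Nat.pow_le_pow_right two_pos hdim)
  exact hnc ⟨Fin.castLE _ ∘ c, fun a b hab => hcast.ne (hc a b hab)⟩

/-- Let `G = (V, E)` be a finite acyclic directed graph and `≤` a partial
order on `E` such that for all consecutive edges `uv, vw, wx` one has `uv < wx` and
`uv ≰ vw`. If `≤` has a boolean realizer of size `d`, then the second arc digraph `G''`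
of `G` (vertices: directed paths `uvw` of length 2; `uvw` adjacent to `vwx`) has
chromatic number at most `2 ^ d`. Consequently, if the chromatic number of `G''`
exceeds `2 ^ d`, then the boolean dimension of `(E, ≤)` exceeds `d`. -/
theorem second_arc_digraph_chromatic_of_boolean_realizer
    {V : Type*} [Fintype V] (E : V → V → Prop)
    (hacyc : ∀ v : V, ¬ Relation.TransGen E v v)
    (le : Edges E → Edges E → Prop) (hpo : IsPartialOrder (Edges E) le)
    (hpath : ∀ e f g : Edges E, e.1.2 = f.1.1 → f.1.2 = g.1.1 →
      le e g ∧ e ≠ g ∧ ¬ le e f)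
    (d : ℕ) :
    ((∃ (L : Fin d → Edges E → Edges E → Prop) (φ : (Fin d → Prop) → Prop),
        IsBooleanRealizer le L φ) →
      ∃ c : Paths2 E → Fin (2 ^ d),
        ∀ a b : Paths2 E, a.1.2 = b.1.1 → c a ≠ c b) ∧
    ((¬ ∃ c : Paths2 E → Fin (2 ^ d),
        ∀ a b : Paths2 E, a.1.2 = b.1.1 → c a ≠ c b) →
      d < booleanDimRel le) :=
  second_arc_digraph_chromatic_of_boolean_realizer_general E le hpo hpath d
end
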